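/- arXiv:2005.10714 — 2 statements merged into one kernel-verified Lean document; each statement's English description precedes it below -/
import Mathlib

section
/- The random series ∑_p (log p)·X(p)/(p − X(p)), summed over primes p, where {X(p)} are independent random variables uniformly distributed on the unit circle, converges almost surely. -/
open MeasureTheory ProbabilityTheory

/-- The uniform probability measure on the unit circle in `ℂ`. -/
noncomputable def circleUniform : MeasureTheory.Measure ℂ :=
  (ENNReal.ofReal (2 * Real.pi)⁻¹) •
    (MeasureTheory.Measure.map (fun t : ℝ => Complex.exp (t * Complex.I))
      (MeasureTheory.volume.restrict (Set.Ico 0 (2 * Real.pi))))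

/-! For a prime `p` and `‖z‖ = 1`,
`log p * z / (p - z) = (log p / p) * z + log p * z ^ 2 / (p * (p - z))`, and the last term is
`O(log p / p ^ 2)`, so it is absolutely summable over the primes. The main terms
`(log p / p) * X p` are independent, centred and bounded by `log p / p`, whose squares are
summable; the real and imaginary parts of their partial sums are therefore `L²`-bounded
martingales, which converge almost surely. -/

open Filter Finset Topology Asymptotics

namespace MeasureTheory

variable {Ω : Type*} {m0 : MeasurableSpace Ω} {μ : Measure Ω}

lemma Submartingale.exists_ae_tendsto_of_integral_sq_le [IsProbabilityMeasure μ]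
    {ℱ : Filtration ℕ m0} {f : ℕ → Ω → ℝ} (hf : Submartingale f ℱ μ)
    (hL2 : ∀ n, MemLp (f n) 2 μ) {B : ℝ} (hB : ∀ n, ∫ ω, f n ω ^ 2 ∂μ ≤ B) :
    ∀ᵐ ω ∂μ, ∃ c, Tendsto (fun n => f n ω) atTop (𝓝 c) := by
  refine hf.exists_ae_tendsto_of_bdd (R := ((B + 1) / 2).toNNReal) fun n => ?_
  have hint_sq : Integrable (fun ω => (f n ω ^ 2 + 1) / 2) μ :=
    ((hL2 n).integrable_sq.add (integrable_const 1)).div_const 2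
  -- `|x| ≤ (x ^ 2 + 1) / 2` turns the second-moment bound into an `L¹` bound
  have habs : ∫ ω, ‖f n ω‖ ∂μ ≤ (B + 1) / 2 :=
    calc ∫ ω, ‖f n ω‖ ∂μ ≤ ∫ ω, (f n ω ^ 2 + 1) / 2 ∂μ :=
          integral_mono (hf.integrable n).norm hint_sq fun ω => by
            nlinarith [sq_nonneg (|f n ω| - 1), sq_abs (f n ω), Real.norm_eq_abs (f n ω)]
      _ = (∫ ω, f n ω ^ 2 ∂μ + 1) / 2 := by
          rw [integral_div, integral_add (hL2 n).integrable_sq (integrable_const 1)]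
          simp
      _ ≤ (B + 1) / 2 := by linarith [hB n]
  rw [eLpNorm_one_eq_lintegral_enorm, ← ofReal_integral_norm_eq_lintegral_enorm (hf.integrable n)]
  exact ENNReal.ofReal_le_ofReal habs

end MeasureTheory

namespace ProbabilityTheory

variable {Ω : Type*} {m0 : MeasurableSpace Ω} {μ : Measure Ω}

lemma iIndepFun.martingale_sum_range_succ {E : Type*} [NormedAddCommGroup E] [NormedSpace ℝ E]
    [CompleteSpace E] [SecondCountableTopology E] [MeasurableSpace E] [BorelSpace E]
    {Z : ℕ → Ω → E} (hZ : ∀ n, StronglyMeasurable (Z n)) (hind : iIndepFun Z μ)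
    (hint : ∀ n, Integrable (Z n) μ) (hmean : ∀ n, μ[Z n] = 0) :
    Martingale (fun n => ∑ k ∈ range (n + 1), Z k) (Filtration.natural Z hZ) μ := by
  have : IsProbabilityMeasure μ := hind.isProbabilityMeasure
  have hint_sum : ∀ n, Integrable (∑ k ∈ range (n + 1), Z k) μ :=
    fun n => integrable_finsetSum' _ fun k _ => hint k
  have hadapted : StronglyAdapted (Filtration.natural Z hZ) fun n => ∑ k ∈ range (n + 1), Z k :=
    fun n => Finset.stronglyMeasurable_sum _ fun k hk =>
      (Filtration.stronglyAdapted_natural hZ k).mono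
        (Filtration.mono _ (Nat.lt_succ_iff.1 (mem_range.1 hk)))
  refine martingale_nat hadapted hint_sum fun n => ?_
  rw [sum_range_succ _ (n + 1)]
  filter_upwards [condExp_add (m := Filtration.natural Z hZ n) (hint_sum n) (hint (n + 1)),
    hind.condExp_natural_ae_eq_of_lt hZ (Nat.lt_succ_self n)] with ω hadd hnext
  rw [hadd, Pi.add_apply, hnext, hmean, add_zero,
    condExp_of_stronglyMeasurable (Filtration.le _ n) (hadapted n) (hint_sum n)]

lemma iIndepFun.exists_ae_tendsto_sum_of_summable_variance {Z : ℕ → Ω → ℝ}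
    (hZ : ∀ n, Measurable (Z n)) (hind : iIndepFun Z μ) (hL2 : ∀ n, MemLp (Z n) 2 μ)
    (hmean : ∀ n, μ[Z n] = 0) (hvar : Summable fun n => Var[Z n; μ]) :
    ∀ᵐ ω ∂μ, ∃ L, Tendsto (fun N => ∑ k ∈ range N, Z k ω) atTop (𝓝 L) := by
  have : IsProbabilityMeasure μ := hind.isProbabilityMeasure
  have hmart := hind.martingale_sum_range_succ (fun n => (hZ n).stronglyMeasurable)
    (fun n => (hL2 n).integrable one_le_two) hmean
  have hsecond : ∀ n, ∫ ω, (∑ k ∈ range (n + 1), Z k) ω ^ 2 ∂μ ≤ ∑' k, Var[Z k; μ] := by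
    intro n
    have hmean_sum : μ[∑ k ∈ range (n + 1), Z k] = 0 := by
      simp only [Finset.sum_apply]
      rw [integral_finsetSum _ fun k _ => (hL2 k).integrable one_le_two]
      simp [hmean]
    rw [← variance_of_integral_eq_zero (hmart.integrable n).aemeasurable hmean_sum,
      IndepFun.variance_sum (fun k _ => hL2 k) fun i _ j _ hij => hind.indepFun hij]
    exact hvar.sum_le_tsum _ fun k _ => variance_nonneg _ _
  filter_upwards [hmart.submartingale.exists_ae_tendsto_of_integral_sq_le
    (fun n => memLp_finsetSum' _ fun k _ => hL2 k) hsecond] with ω ⟨L, hL⟩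
  refine ⟨L, (tendsto_add_atTop_iff_nat 1).1 ?_⟩
  simpa only [Finset.sum_apply] using hL

lemma iIndepFun.exists_ae_tendsto_sum_of_norm_le {Z : ℕ → Ω → ℂ}
    (hZ : ∀ n, Measurable (Z n)) (hind : iIndepFun Z μ) (hmean : ∀ n, μ[Z n] = 0)
    {b : ℕ → ℝ} (hb : ∀ n, ∀ᵐ ω ∂μ, ‖Z n ω‖ ≤ b n) (hsum : Summable fun n => b n ^ 2) :
    ∀ᵐ ω ∂μ, ∃ L, Tendsto (fun N => ∑ k ∈ range N, Z k ω) atTop (𝓝 L) := by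
  have : IsProbabilityMeasure μ := hind.isProbabilityMeasure
  have hcomponent : ∀ f : ℂ →L[ℝ] ℝ, ‖f‖ ≤ 1 →
      ∀ᵐ ω ∂μ, ∃ L, Tendsto (fun N => ∑ k ∈ range N, f (Z k ω)) atTop (𝓝 L) := by
    intro f hf
    have hbound : ∀ n, ∀ᵐ ω ∂μ, f (Z n ω) ∈ Set.Icc (-b n) (b n) := fun n => by
      filter_upwards [hb n] with ω hω
      refine abs_le.1 ((f.le_opNorm _).trans ?_)
      nlinarith [norm_nonneg f, norm_nonneg (Z n ω)]
    have hmeas : ∀ n, Measurable fun ω => f (Z n ω) := fun n => f.measurable.comp (hZ n)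
    refine (hind.comp (fun _ => f) fun _ => f.measurable).exists_ae_tendsto_sum_of_summable_variance
      hmeas (fun n => memLp_of_bounded (hbound n) (hmeas n).aestronglyMeasurable 2)
      (fun n => ?_) (hsum.of_nonneg_of_le (fun n => variance_nonneg _ _) fun n => ?_)
    · rw [f.integral_comp_comm (Integrable.of_bound (hZ n).aestronglyMeasurable _ (hb n)),
        hmean, map_zero]
    · convert variance_le_sq_of_bounded (hbound n) (hmeas n).aemeasurable using 1
      ring
  filter_upwards [hcomponent Complex.reCLM (by simp), hcomponent Complex.imCLM (by simp)]
    with ω ⟨x, hx⟩ ⟨y, hy⟩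
  refine ⟨x + y * Complex.I, (hx.ofReal.add (hy.ofReal.mul_const Complex.I)).congr fun N => ?_⟩
  simp only [Complex.reCLM_apply, Complex.imCLM_apply, Complex.ofReal_sum, sum_mul,
    ← sum_add_distrib, Complex.re_add_im]

end ProbabilityTheory

lemma summable_log_pow_div_rpow (j : ℕ) {s : ℝ} (hs : 1 < s) :
    Summable fun n : ℕ => Real.log n ^ j / (n : ℝ) ^ s := by
  obtain ⟨ε, hε, hεs⟩ : ∃ ε : ℝ, 0 < ε ∧ ε - s < -1 := ⟨(s - 1) / 2, by linarith, by linarith⟩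
  have hlog : (fun x : ℝ => Real.log x ^ j) =O[atTop] fun x => x ^ ε := by
    simpa only [Real.rpow_natCast] using
      (isLittleO_log_rpow_rpow_atTop (j : ℝ) hε).isBigO
  have hquot : (fun x : ℝ => Real.log x ^ j / x ^ s) =O[atTop] fun x => x ^ (ε - s) := by
    refine (hlog.mul (isBigO_refl (fun x : ℝ => (x ^ s)⁻¹) atTop)).congr'
      (.of_forall fun x => div_eq_mul_inv _ _) ?_
    filter_upwards [eventually_gt_atTop 0] with x hx
    rw [Real.rpow_sub hx, div_eq_mul_inv]
  exact summable_of_isBigO_nat' (Real.summable_nat_rpow.2 hεs)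
    (hquot.comp_tendsto tendsto_natCast_atTop_atTop)

lemma div_two_le_norm_ofReal_sub {p : ℝ} (hp : 2 ≤ p) {z : ℂ} (hz : ‖z‖ = 1) :
    p / 2 ≤ ‖(p : ℂ) - z‖ := by
  have := norm_sub_norm_le (p : ℂ) z
  rw [Complex.norm_real, Real.norm_of_nonneg (by linarith), hz] at this
  linarith

lemma norm_sq_div_mul_sub_le {p : ℝ} (hp : 2 ≤ p) {z : ℂ} (hz : ‖z‖ = 1) :
    ‖z ^ 2 / (p * (p - z))‖ ≤ 2 / p ^ 2 := by
  have hdist := div_two_le_norm_ofReal_sub hp hz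
  rw [norm_div, norm_mul, norm_pow, hz, Complex.norm_real, Real.norm_of_nonneg (by linarith),
    one_pow, div_le_div_iff₀ (by nlinarith) (by positivity)]
  nlinarith

lemma log_mul_div_sub_eq {p : ℕ} (hp : 2 ≤ p) {z : ℂ} (hz : ‖z‖ = 1) :
    (Real.log p : ℂ) * z / (p - z) = Real.log p / p * z + Real.log p * (z ^ 2 / (p * (p - z))) := by
  have hp' : (2 : ℝ) ≤ p := mod_cast hp
  have hpz : (p : ℂ) - z ≠ 0 := by
    have := div_two_le_norm_ofReal_sub hp' hz
    rw [Complex.ofReal_natCast] at this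
    exact norm_pos_iff.1 (by linarith)
  have hp0 : (p : ℂ) ≠ 0 := Nat.cast_ne_zero.2 (by omega)
  field_simp
  ring

lemma summable_norm_log_div_sq {q : ℕ → ℕ} (hq : q.Injective) :
    Summable fun k => ‖(Real.log (q k) : ℂ) / q k‖ ^ 2 := by
  simpa only [norm_div, Complex.norm_real, Complex.norm_natCast, Real.norm_eq_abs, div_pow, sq_abs,
    Real.rpow_two, Function.comp_def] using
    (summable_log_pow_div_rpow 2 one_lt_two).comp_injective hq

lemma summable_log_mul_sq_div_mul_sub {q : ℕ → ℕ} (hq : q.Injective) (hq2 : ∀ k, 2 ≤ q k)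
    {z : ℕ → ℂ} (hz : ∀ k, ‖z k‖ = 1) :
    Summable fun k => (Real.log (q k) : ℂ) * (z k ^ 2 / (q k * (q k - z k))) := by
  have hsum := ((summable_log_pow_div_rpow 1 one_lt_two).comp_injective hq).mul_left 2
  refine Summable.of_norm_bounded hsum fun k => ?_
  have hq2' : (2 : ℝ) ≤ q k := mod_cast hq2 k
  have hlog : 0 ≤ Real.log (q k) := Real.log_nonneg (by linarith)
  have hrem := norm_sq_div_mul_sub_le hq2' (hz k)
  rw [Complex.ofReal_natCast] at hrem
  rw [norm_mul, Complex.norm_real, Real.norm_of_nonneg hlog, Function.comp_apply, pow_one,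
    Real.rpow_two, mul_div_assoc', mul_comm 2, mul_div_assoc]
  exact mul_le_mul_of_nonneg_left hrem hlog

lemma Nat.tendsto_count_atTop {p : ℕ → Prop} [DecidablePred p] (hp : (Set.ofPred p).Infinite) :
    Tendsto (Nat.count p) atTop atTop := by
  refine tendsto_atTop_atTop_of_monotone (Nat.count_monotone p) fun k => ⟨Nat.nth p k + 1, ?_⟩
  rw [Nat.count_succ, if_pos (Nat.nth_mem_of_infinite hp k), Nat.count_nth_of_infinite hp]
  omega

lemma Nat.sum_filter_range_eq_sum_range_count {M : Type*} [AddCommMonoid M] (p : ℕ → Prop)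
    [DecidablePred p] (f : ℕ → M) (N : ℕ) :
    ∑ n ∈ range N with p n, f n = ∑ k ∈ range (Nat.count p N), f (Nat.nth p k) := by
  induction N with
  | zero => simp
  | succ N ih =>
    rw [range_add_one, filter_insert, Nat.count_succ]
    by_cases hpN : p N
    · rw [if_pos hpN, sum_insert (by simp), if_pos hpN, sum_range_succ, Nat.nth_count hpN, ih,
        add_comm]
    · rw [if_neg hpN, if_neg hpN, add_zero, ih]

lemma Nat.tendsto_sum_filter_range_of_tendsto_sum_nth {M : Type*} [AddCommMonoid M]
    [TopologicalSpace M] {p : ℕ → Prop} [DecidablePred p] (hp : (Set.ofPred p).Infinite)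
    {f : ℕ → M} {L : M} (h : Tendsto (fun K => ∑ k ∈ range K, f (Nat.nth p k)) atTop (𝓝 L)) :
    Tendsto (fun N => ∑ n ∈ range N with p n, f n) atTop (𝓝 L) :=
  (h.comp (Nat.tendsto_count_atTop hp)).congr fun N =>
    (Nat.sum_filter_range_eq_sum_range_count p f N).symm

section circleUniform

lemma circleUniform_ae_norm_eq_one : ∀ᵐ z ∂circleUniform, ‖z‖ = 1 := by
  refine Measure.ae_smul_measure ((ae_map_iff (by fun_prop)
    (isClosed_eq continuous_norm continuous_const).measurableSet).2 (ae_of_all _ fun t => ?_)) _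
  exact Complex.norm_exp_ofReal_mul_I t

lemma integral_circleUniform_id : ∫ z, z ∂circleUniform = 0 := by
  have hexp : ∫ t in (0)..(2 * Real.pi), Complex.exp (Complex.I * t) = 0 := by
    rw [integral_exp_mul_complex Complex.I_ne_zero, mul_comm, Complex.ofReal_mul,
      Complex.ofReal_ofNat, Complex.exp_two_pi_mul_I]
    simp
  rw [circleUniform, integral_smul_measure,
    integral_map (f := fun z : ℂ => z) (by fun_prop) aestronglyMeasurable_id,
    integral_Ico_eq_integral_Ioc, ← intervalIntegral.integral_of_le Real.two_pi_pos.le]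
  simp [mul_comm _ Complex.I, hexp]

variable {Ω : Type*} [MeasurableSpace Ω] {μ : Measure Ω} {Y : Ω → ℂ}

lemma ae_norm_eq_one_of_map_eq_circleUniform (hY : Measurable Y)
    (hmap : μ.map Y = circleUniform) : ∀ᵐ ω ∂μ, ‖Y ω‖ = 1 :=
  ae_of_ae_map hY.aemeasurable (hmap ▸ circleUniform_ae_norm_eq_one)

lemma integral_eq_zero_of_map_eq_circleUniform (hY : Measurable Y)
    (hmap : μ.map Y = circleUniform) : μ[Y] = 0 := by
  rw [← integral_map (f := fun z : ℂ => z) hY.aemeasurable aestronglyMeasurable_id, hmap]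
  exact integral_circleUniform_id

lemma ProbabilityTheory.iIndepFun.exists_ae_tendsto_sum_mul_of_map_eq_circleUniform
    {Y : ℕ → Ω → ℂ} (hY : ∀ k, Measurable (Y k)) (hmap : ∀ k, μ.map (Y k) = circleUniform)
    (hind : iIndepFun Y μ) {c : ℕ → ℂ} (hc : Summable fun k => ‖c k‖ ^ 2) :
    ∀ᵐ ω ∂μ, ∃ L, Tendsto (fun K => ∑ k ∈ range K, c k * Y k ω) atTop (𝓝 L) := by
  refine (hind.comp (fun k z => c k * z) fun k => by fun_prop).exists_ae_tendsto_sum_of_norm_le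
    (fun k => by fun_prop) (fun k => ?_) (fun k => ?_) hc
  · rw [integral_const_mul, integral_eq_zero_of_map_eq_circleUniform (hY k) (hmap k), mul_zero]
  · filter_upwards [ae_norm_eq_one_of_map_eq_circleUniform (hY k) (hmap k)] with ω hω
    rw [norm_mul, hω, mul_one]

end circleUniform

theorem random_euler_series_converges_ae_general
    {Ω : Type*} [MeasurableSpace Ω] (μ : MeasureTheory.Measure Ω)
    (X : ℕ → Ω → ℂ) (hmeas : ∀ n, Measurable (X n))
    (hunif : ∀ p : ℕ, p.Prime → MeasureTheory.Measure.map (X p) μ = circleUniform)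
    (hindep : ProbabilityTheory.iIndepFun
      (fun p : Nat.Primes => X (p : ℕ)) μ) :
    ∀ᵐ ω ∂μ, ∃ L : ℂ, Filter.Tendsto
      (fun N : ℕ => ∑ p ∈ (Finset.range N).filter Nat.Prime,
        (Real.log p) * X p ω / ((p : ℂ) - X p ω))
      Filter.atTop (nhds L) := by
  set e := Nat.nth Nat.Prime
  have he_prime : ∀ k, (e k).Prime := Nat.prime_nth_prime
  have he_inj : e.Injective := Nat.nth_injective Nat.infinite_setOfPred_prime
  have hmain := (hindep.precomp (g := fun k => ⟨e k, he_prime k⟩) fun i j hij =>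
    he_inj (congrArg Subtype.val hij)).exists_ae_tendsto_sum_mul_of_map_eq_circleUniform
    (fun k => hmeas _) (fun k => hunif _ (he_prime k)) (summable_norm_log_div_sq he_inj)
  have hunit : ∀ᵐ ω ∂μ, ∀ k, ‖X (e k) ω‖ = 1 := ae_all_iff.2 fun k =>
    ae_norm_eq_one_of_map_eq_circleUniform (hmeas _) (hunif _ (he_prime k))
  filter_upwards [hmain, hunit] with ω ⟨L, hL⟩ hω
  have hrem := summable_log_mul_sq_div_mul_sub he_inj (fun k => (he_prime k).two_le) hω
  refine ⟨_, Nat.tendsto_sum_filter_range_of_tendsto_sum_nth Nat.infinite_setOfPred_prime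
    ((hL.add hrem.hasSum.tendsto_sum_nat).congr fun K => ?_)⟩
  rw [← sum_add_distrib]
  exact sum_congr rfl fun k _ => (log_mul_div_sub_eq (he_prime k).two_le (hω k)).symm

theorem random_euler_series_converges_ae
    {Ω : Type*} [MeasurableSpace Ω] (μ : MeasureTheory.Measure Ω)
    [MeasureTheory.IsProbabilityMeasure μ]
    (X : ℕ → Ω → ℂ) (hmeas : ∀ n, Measurable (X n))
    (hunif : ∀ p : ℕ, p.Prime → MeasureTheory.Measure.map (X p) μ = circleUniform)
    (hindep : ProbabilityTheory.iIndepFun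
      (fun p : Nat.Primes => X (p : ℕ)) μ) :
    ∀ᵐ ω ∂μ, ∃ L : ℂ, Filter.Tendsto
      (fun N : ℕ => ∑ p ∈ (Finset.range N).filter Nat.Prime,
        (Real.log p) * X p ω / ((p : ℂ) - X p ω))
      Filter.atTop (nhds L) :=
  random_euler_series_converges_ae_general μ X hmeas hunif hindep
end

section
/- Let K(z) = (sin(πz)/(πz))^2 (with K(0) = 1). Then the Fourier transform of K (with the convention K̂(ξ) = ∫_ℝ K(x) e^{−2πi ξ x} dx) equals max(0, 1 − |ξ|) for all real ξ. -/
/-- The Fejér kernel on `ℝ`. -/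
noncomputable def Kfejer (x : ℝ) : ℝ :=
  if x = 0 then 1 else (Real.sin (Real.pi * x) / (Real.pi * x)) ^ 2

/-!
The triangle function `Λ ξ = max 0 (1 - |ξ|)` is continuous with compact support, and an
elementary integration gives `𝓕 Λ = K`, since `Λ` is even and
`∫₀¹ (1 - x) (e^{cx} + e^{-cx}) dx = (e^c + e^{-c} - 2) / c²`, which for `c = 2π i ξ` is
`(sin πξ / πξ)²`. As `K x ≤ 2 / (1 + (πx)²)` is integrable, Fourier inversion applies and
`𝓕 K = 𝓕 (𝓕 Λ) = Λ (-·) = Λ`.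
-/

open MeasureTheory Real FourierTransform
open Complex (I)
open scoped Complex

noncomputable def triangle (x : ℝ) : ℝ := max 0 (1 - |x|)

@[fun_prop]
lemma continuous_triangle : Continuous triangle := by
  unfold triangle; fun_prop

lemma triangle_neg (x : ℝ) : triangle (-x) = triangle x := by
  rw [triangle, triangle, abs_neg]

lemma triangle_of_mem_Icc {x : ℝ} (hx : x ∈ Set.Icc (0 : ℝ) 1) : triangle x = 1 - x := by
  rw [triangle, abs_of_nonneg hx.1, max_eq_right (by linarith [hx.2])]

lemma support_triangle : Function.support triangle = Set.Ioo (-1) 1 := by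
  ext x
  simp only [Function.mem_support, triangle, Set.mem_Ioo, ne_eq, ← abs_lt]
  constructor
  · intro h; by_contra h'; exact h (max_eq_left (by linarith [not_lt.1 h']))
  · intro h; rw [max_eq_right (by linarith)]; linarith

lemma integrable_triangle : Integrable fun x => (triangle x : ℂ) := by
  refine Continuous.integrable_of_hasCompactSupport (by fun_prop) ?_
  refine HasCompactSupport.comp_left ?_ Complex.ofReal_zero
  refine HasCompactSupport.intro (isCompact_Icc (a := -1) (b := 1)) fun x hx => ?_
  exact Function.notMem_support.1 fun h => hx (Set.Ioo_subset_Icc_self (support_triangle ▸ h))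

lemma integral_triangle_mul {f : ℝ → ℂ} (hf : Continuous f) :
    ∫ x, (triangle x : ℂ) * f x = ∫ x in (0 : ℝ)..1, (1 - x : ℂ) * (f x + f (-x)) := by
  have hg : Continuous fun x => (triangle x : ℂ) * f x := by fun_prop
  have hg_neg : Continuous fun x => (triangle (-x) : ℂ) * f (-x) := hg.comp continuous_neg
  have hsupp : Function.support (fun x => (triangle x : ℂ) * f x) ⊆ Set.Ioc (-1) 1 := by
    intro x hx
    refine Set.Ioo_subset_Ioc_self (support_triangle ▸ fun h => hx ?_)
    simp [h]
  rw [← intervalIntegral.integral_eq_integral_of_support_subset hsupp,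
    ← intervalIntegral.integral_add_adjacent_intervals (b := 0) (hg.intervalIntegrable _ _)
      (hg.intervalIntegrable _ _), ← neg_zero, ← intervalIntegral.integral_comp_neg, neg_zero,
    ← intervalIntegral.integral_add (hg_neg.intervalIntegrable 0 1)
      (hg.intervalIntegrable 0 1)]
  refine intervalIntegral.integral_congr fun x hx => ?_
  rw [Set.uIcc_of_le zero_le_one] at hx
  simp only [triangle_neg, triangle_of_mem_Icc hx]
  push_cast
  ring

lemma integral_one_sub_mul_cexp {c : ℂ} (hc : c ≠ 0) :
    ∫ x in (0 : ℝ)..1, (1 - x : ℂ) * cexp (c * x) = (cexp c - 1 - c) / c ^ 2 := by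
  have hderiv (x : ℝ) : HasDerivAt (fun t : ℝ => ((1 - t) / c + 1 / c ^ 2) * cexp (c * t))
      ((1 - x : ℂ) * cexp (c * x)) x := by
    have hlin : HasDerivAt (fun z : ℂ => (1 - z) / c + 1 / c ^ 2) (-1 / c) (x : ℂ) := by
      simpa using (((hasDerivAt_id (x : ℂ)).const_sub 1).div_const c).add_const (1 / c ^ 2)
    have hexp : HasDerivAt (fun z : ℂ => cexp (c * z)) (cexp (c * x) * c) (x : ℂ) := by
      simpa using ((hasDerivAt_id (x : ℂ)).const_mul c).cexp
    refine ((hlin.mul hexp).comp_ofReal).congr_deriv ?_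
    field_simp
    ring
  rw [intervalIntegral.integral_eq_sub_of_hasDerivAt (fun x _ => hderiv x)
    (by apply Continuous.intervalIntegrable; fun_prop)]
  simp only [Complex.ofReal_one, Complex.ofReal_zero, mul_zero, mul_one, Complex.exp_zero]
  field_simp
  ring

lemma integral_one_sub_mul_cexp_add_cexp_neg {c : ℂ} (hc : c ≠ 0) :
    ∫ x in (0 : ℝ)..1, (1 - x : ℂ) * (cexp (c * x) + cexp (-c * x))
      = (cexp c + cexp (-c) - 2) / c ^ 2 := by
  simp_rw [mul_add]
  rw [intervalIntegral.integral_add (by apply Continuous.intervalIntegrable; fun_prop)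
    (by apply Continuous.intervalIntegrable; fun_prop), integral_one_sub_mul_cexp hc,
    integral_one_sub_mul_cexp (neg_ne_zero.2 hc), neg_sq]
  ring

lemma cexp_two_mul_I_add_cexp_neg_sub_two (y : ℂ) :
    cexp (2 * y * I) + cexp (-(2 * y * I)) - 2 = -4 * Complex.sin y ^ 2 := by
  have h2cos := Complex.two_cos (2 * y)
  rw [neg_mul, Complex.cos_two_mul, Complex.cos_sq'] at h2cos
  linear_combination -h2cos

lemma integral_triangle_mul_cexp (y : ℝ) :
    ∫ x, (triangle x : ℂ) * cexp (2 * y * I * x) = (sinc y ^ 2 : ℝ) := by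
  rw [integral_triangle_mul (by fun_prop)]
  rcases eq_or_ne y 0 with rfl | hy
  · simp only [Complex.ofReal_zero, mul_zero, zero_mul, Complex.exp_zero, sinc_zero]
    have h (x : ℝ) : (1 - x : ℂ) * (1 + 1) = ((2 - 2 * x : ℝ) : ℂ) := by push_cast; ring
    simp_rw [h]
    rw [intervalIntegral.integral_ofReal, intervalIntegral.integral_sub intervalIntegrable_const
      (intervalIntegral.intervalIntegrable_id.const_mul 2), intervalIntegral.integral_const_mul,
      integral_id]
    norm_num
  · have hc : (2 * y * I : ℂ) ≠ 0 := by simp [hy, Complex.I_ne_zero]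
    have hy' : (y : ℂ) ≠ 0 := Complex.ofReal_ne_zero.2 hy
    simp_rw [Complex.ofReal_neg, mul_neg, ← neg_mul (2 * (y : ℂ) * I)]
    rw [integral_one_sub_mul_cexp_add_cexp_neg hc, cexp_two_mul_I_add_cexp_neg_sub_two,
      sinc_of_ne_zero hy]
    push_cast
    field_simp
    linear_combination (-4 * Complex.sin y ^ 2) * Complex.I_sq

lemma sinc_sq_mul_one_add_sq_le (x : ℝ) : sinc x ^ 2 * (1 + x ^ 2) ≤ 2 := by
  have hsin : sinc x * x = sin x := by
    rcases eq_or_ne x 0 with rfl | hx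
    · simp
    · rw [sinc_of_ne_zero hx, div_mul_cancel₀ _ hx]
  have hsinc : sinc x ^ 2 ≤ 1 := (sq_le_one_iff_abs_le_one _).2 (abs_sinc_le_one x)
  calc sinc x ^ 2 * (1 + x ^ 2) = sinc x ^ 2 + (sinc x * x) ^ 2 := by ring
    _ ≤ 2 := by rw [hsin]; linarith [sin_sq_le_one x]

lemma integrable_sinc_sq : Integrable fun x => sinc x ^ 2 := by
  refine (integrable_inv_one_add_sq.const_mul 2).mono' (by fun_prop) (.of_forall fun x => ?_)
  rw [norm_of_nonneg (sq_nonneg _), ← div_eq_mul_inv, le_div_iff₀ (by positivity)]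
  exact sinc_sq_mul_one_add_sq_le x

lemma Kfejer_eq_sinc_sq (x : ℝ) : Kfejer x = sinc (π * x) ^ 2 := by
  simp [Kfejer, sinc_apply, pi_ne_zero]

lemma integrable_Kfejer : Integrable fun x => (Kfejer x : ℂ) := by
  simp_rw [Kfejer_eq_sinc_sq]
  exact (integrable_sinc_sq.comp_mul_left' pi_ne_zero).ofReal

lemma fourier_real_eq_integral_mul_cexp (f : ℝ → ℂ) (w : ℝ) :
    𝓕 f w = ∫ v, f v * cexp (-2 * π * I * w * v) := by
  rw [fourier_real_eq_integral_exp_smul]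
  congr 1 with v
  rw [smul_eq_mul, mul_comm]
  push_cast
  ring_nf

lemma fourier_triangle (ξ : ℝ) : 𝓕 (fun x => (triangle x : ℂ)) ξ = Kfejer ξ := by
  rw [fourier_real_eq_integral_mul_cexp, Kfejer_eq_sinc_sq, ← sinc_neg,
    ← integral_triangle_mul_cexp]
  congr 1 with x
  push_cast
  ring_nf

theorem fejer_fourier_transform (ξ : ℝ) :
    ∫ x : ℝ, (Kfejer x : ℂ) * Complex.exp (-2 * Real.pi * Complex.I * ξ * x)
      = ((max 0 (1 - |ξ|) : ℝ) : ℂ) := by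
  have hK : 𝓕 (fun x => (triangle x : ℂ)) = fun x => (Kfejer x : ℂ) := funext fourier_triangle
  calc ∫ x : ℝ, (Kfejer x : ℂ) * cexp (-2 * π * I * ξ * x)
      = 𝓕 (𝓕 fun x => (triangle x : ℂ)) ξ := by rw [hK, fourier_real_eq_integral_mul_cexp]
    _ = 𝓕⁻ (𝓕 fun x => (triangle x : ℂ)) (-ξ) := by
        rw [fourierInv_eq_fourier_neg, neg_neg]
    _ = triangle (-ξ) :=
        integrable_triangle.fourierInv_fourier_eq (hK ▸ integrable_Kfejer)
          (by fun_prop : Continuous fun x => (triangle x : ℂ)).continuousAt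
    _ = _ := by rw [triangle_neg, triangle]
end
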